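/- Let d be a positive integer, T ∈ M_{2^n} with ‖T‖_∞ ≤ 1, and let J be a random subset of [n] where each element is included independently with probability 1/d. Then 𝔼_J[Σ_{j∈J} ‖R_j^J(T)‖₂²] ≥ (1/8) Σ_{s: d ≤ |supp(s)| < 2d} |T̂(s)|². -/

import Mathlib

open scoped BigOperators ComplexOrder
open Matrix

noncomputable section

abbrev QM (n : ℕ) := Matrix (Fin n → Fin 2) (Fin n → Fin 2) ℂ

namespace QM

variable {n : ℕ}

/-- Normalized trace on `M_{2^n}`. -/
def qtr (T : QM n) : ℂ := Matrix.trace T / 2 ^ n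

/-- Singular values of `T` (eigenvalues of `|T| = (TᴴT)^{1/2}`). -/
def sv (T : QM n) (i : Fin n → Fin 2) : ℝ :=
  Real.sqrt ((Matrix.posSemidef_conjTranspose_mul_self T).1.eigenvalues i)

/-- Normalized Schatten `p`-norm: `(tr |T|^p)^{1/p}` with normalized trace. -/
def snorm (p : ℝ) (T : QM n) : ℝ :=
  ((∑ i, sv T i ^ p) / 2 ^ n) ^ (1 / p)

/-- Squared normalized `L₂`-norm: `tr(TᴴT)`. -/
def l2sq (T : QM n) : ℝ := (Matrix.trace (Tᴴ * T)).re / 2 ^ n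

/-- Variance `‖T - tr(T)1‖₂²`. -/
def qvar (T : QM n) : ℝ := l2sq (T - qtr T • 1)

/-- Operator norm. -/
def opnorm (T : QM n) : ℝ := ‖Matrix.toEuclideanCLM (𝕜 := ℂ) T‖

/-- The Pauli matrices. -/
def pauli : Fin 4 → Matrix (Fin 2) (Fin 2) ℂ
  | 0 => 1
  | 1 => !![1, 0; 0, -1]
  | 2 => !![0, 1; 1, 0]
  | 3 => !![0, Complex.I; -Complex.I, 0]

/-- The Pauli tensor basis `σ_s` for `s ∈ {0,1,2,3}^n`. -/
def sigma (s : Fin n → Fin 4) : QM n :=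
  Matrix.of fun x y => ∏ j, pauli (s j) (x j) (y j)

/-- Fourier coefficient `T̂(s) = tr(σ_s* T)`. -/
def fc (T : QM n) (s : Fin n → Fin 4) : ℂ := qtr ((sigma s)ᴴ * T)

/-- Support of a multi-index. -/
def supp (s : Fin n → Fin 4) : Finset (Fin n) := Finset.univ.filter fun j => s j ≠ 0

/-- The `k`-th partial derivative, via the Fourier expansion. -/
def djF (k : Fin n) (T : QM n) : QM n :=
  ∑ s ∈ Finset.univ.filter (fun s : Fin n → Fin 4 => s k ≠ 0), fc T s • sigma s

/-- Conditional expectation onto the subalgebra `M_J`. -/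
def condExp (J : Finset (Fin n)) (T : QM n) : QM n :=
  ∑ s ∈ Finset.univ.filter (fun s : Fin n → Fin 4 => supp s ⊆ J), fc T s • sigma s

/-- The restriction operator `R_j^J(T) = 𝓔_{M_{J^c ∪ {j}}}(d_j(T))`. -/
def RR (J : Finset (Fin n)) (j : Fin n) (T : QM n) : QM n :=
  condExp (Jᶜ ∪ {j}) (djF j T)

/-- The operator `δ^𝓛`. -/
def deltaL (δ : ℝ) (T : QM n) : QM n :=
  ∑ s : Fin n → Fin 4, (((δ : ℂ) ^ (supp s).card) * fc T s) • sigma s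

/-- The quantum Ornstein–Uhlenbeck semigroup `e^{-t𝓛}`. -/
def heat (t : ℝ) (T : QM n) : QM n :=
  ∑ s : Fin n → Fin 4, ((Real.exp (-t * (supp s).card) : ℂ) * fc T s) • sigma s

/-- `H_d(T) = (1-1/(2d))^𝓛(T) - (1-1/d)^𝓛(T)`. -/
def Hd (d : ℕ) (T : QM n) : QM n :=
  deltaL (1 - 1 / (2 * (d : ℝ))) T - deltaL (1 - 1 / (d : ℝ)) T

/-- Probability of a subset `J` when each coordinate is included with probability `δ`. -/
def mu (δ : ℝ) (J : Finset (Fin n)) : ℝ := δ ^ J.card * (1 - δ) ^ (n - J.card)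

/-- Total `L₂`-influence via Fourier coefficients. -/
def InfF (T : QM n) : ℝ := ∑ s : Fin n → Fin 4, ((supp s).card : ℝ) * ‖fc T s‖ ^ 2

/-- Spectral weight `W_{≈d}(T)`. -/
def Wapprox (T : QM n) (d : ℕ) : ℝ :=
  ∑ s ∈ Finset.univ.filter
      (fun s : Fin n → Fin 4 => d ≤ (supp s).card ∧ (supp s).card < 2 * d),
    ‖fc T s‖ ^ 2

/-- Conditional expectation onto the algebra with identity in slot `j`
(`id ⊗ ⋯ ⊗ tr(·)1₂ ⊗ ⋯ ⊗ id`). -/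
def slotExp (j : Fin n) (T : QM n) : QM n :=
  Matrix.of fun x y =>
    if x j = y j then (∑ b : Fin 2, T (Function.update x j b) (Function.update y j b)) / 2
    else 0

/-- The `j`-th partial derivative `d_j = id - (id ⊗ ⋯ ⊗ tr(·)1₂ ⊗ ⋯ ⊗ id)`. -/
def dj (j : Fin n) (T : QM n) : QM n := T - slotExp j T

end QM

/-! By orthogonality of the Pauli basis, `‖R_j^J(T)‖₂²` is the Fourier weight of the `s` with
`supp s ∩ J = {j}`. Summing over `j ∈ J` and averaging over `J` gives
`Σ_s |T̂(s)|² · P(|supp s ∩ J| = 1)`, and for `|supp s| = m ∈ [d, 2d)` this probability is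
`(m/d)(1 - 1/d)^(m-1) ≥ e⁻² ≥ 1/8`. -/

open Finset

namespace Finset

lemma inter_eq_singleton_iff {α : Type*} [Fintype α] [DecidableEq α] {A J : Finset α} {j : α}
    (hj : j ∈ J) :
    A ∩ J = {j} ↔ A ⊆ Jᶜ ∪ {j} ∧ j ∈ A := by
  simp only [Finset.ext_iff, subset_iff, mem_inter, mem_union, mem_compl, mem_singleton]
  grind

lemma sum_ite_inter_eq_singleton {α M : Type*} [DecidableEq α] [AddCommMonoid M]
    (A J : Finset α) (r : M) :
    (∑ j ∈ J, if A ∩ J = {j} then r else 0) = if #(A ∩ J) = 1 then r else 0 := by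
  by_cases h : #(A ∩ J) = 1
  · obtain ⟨a, ha⟩ := card_eq_one.mp h
    have haJ : a ∈ J := mem_of_mem_inter_right (ha ▸ mem_singleton_self a)
    simp [ha, haJ]
  · rw [if_neg h]
    exact sum_eq_zero fun j _ => if_neg fun hj => h (by rw [hj, card_singleton])

end Finset

namespace QM

lemma sum_sum_conj_pauli_mul_pauli (k l : Fin 4) :
    ∑ a : Fin 2, ∑ b : Fin 2, star (pauli k b a) * pauli l b a = if k = l then 2 else 0 := by
  fin_cases k <;> fin_cases l <;>
    simp [pauli, Fin.sum_univ_two, Complex.ext_iff] <;> norm_num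

variable {n : ℕ}

lemma trace_conjTranspose_sigma_mul_sigma (s t : Fin n → Fin 4) :
    trace ((sigma s)ᴴ * sigma t) = if s = t then 2 ^ n else 0 := by
  calc trace ((sigma s)ᴴ * sigma t)
      = ∑ x : Fin n → Fin 2, ∑ y : Fin n → Fin 2,
          ∏ j, star (pauli (s j) (y j) (x j)) * pauli (t j) (y j) (x j) := by
        simp only [trace, Matrix.diag, mul_apply, conjTranspose_apply, sigma, of_apply, star_prod,
          ← prod_mul_distrib]
    _ = ∏ j, ∑ a : Fin 2, ∑ b : Fin 2, star (pauli (s j) b a) * pauli (t j) b a := by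
        simp only [prod_univ_sum, Fintype.piFinset_univ]
    _ = if s = t then 2 ^ n else 0 := by
        simp only [sum_sum_conj_pauli_mul_pauli, prod_ite_zero, prod_const,
          card_univ, Fintype.card_fin, mem_univ, forall_const, funext_iff]

lemma trace_conjTranspose_sigma_mul (T : QM n) (s : Fin n → Fin 4) :
    trace ((sigma s)ᴴ * T) = 2 ^ n * fc T s := by
  rw [fc, qtr, mul_div_cancel₀ _ (pow_ne_zero _ two_ne_zero)]

lemma fc_sum_smul_sigma (S : Finset (Fin n → Fin 4)) (c : (Fin n → Fin 4) → ℂ)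
    (s : Fin n → Fin 4) : fc (∑ t ∈ S, c t • sigma t) s = if s ∈ S then c s else 0 := by
  simp only [fc, qtr, Matrix.mul_sum, Matrix.mul_smul, trace_sum, trace_smul,
    trace_conjTranspose_sigma_mul_sigma, smul_eq_mul, mul_ite, mul_zero, eq_comm (a := s),
    sum_ite_eq']
  split_ifs
  · exact mul_div_cancel_right₀ _ (pow_ne_zero _ two_ne_zero)
  · exact zero_div _

lemma l2sq_sum_smul_sigma (S : Finset (Fin n → Fin 4)) (c : (Fin n → Fin 4) → ℂ) :
    l2sq (∑ t ∈ S, c t • sigma t) = ∑ t ∈ S, ‖c t‖ ^ 2 := by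
  have key : trace ((∑ t ∈ S, c t • sigma t)ᴴ * ∑ t ∈ S, c t • sigma t)
      = ((2 ^ n * ∑ t ∈ S, ‖c t‖ ^ 2 : ℝ) : ℂ) := by
    conv_lhs => rw [conjTranspose_sum]
    simp only [conjTranspose_smul, Matrix.sum_mul, Matrix.smul_mul, trace_sum, trace_smul,
      trace_conjTranspose_sigma_mul, fc_sum_smul_sigma]
    push_cast
    rw [mul_sum]
    refine sum_congr rfl fun t ht => ?_
    rw [if_pos ht, smul_eq_mul, ← Complex.conj_mul', Complex.star_def]
    ring
  rw [l2sq, key, Complex.ofReal_re, mul_div_cancel_left₀ _ (by positivity)]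

lemma fc_djF (j : Fin n) (T : QM n) (s : Fin n → Fin 4) :
    fc (djF j T) s = if s j ≠ 0 then fc T s else 0 := by
  simp [djF, fc_sum_smul_sigma]

@[simp]
lemma mem_supp {s : Fin n → Fin 4} {j : Fin n} : j ∈ supp s ↔ s j ≠ 0 := by
  simp [supp]

lemma l2sq_RR {J : Finset (Fin n)} {j : Fin n} (hj : j ∈ J) (T : QM n) :
    l2sq (RR J j T) = ∑ s with supp s ∩ J = {j}, ‖fc T s‖ ^ 2 := by
  simp only [RR, condExp, fc_djF, l2sq_sum_smul_sigma, apply_ite (‖·‖ ^ 2), norm_zero,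
    sum_ite, ne_eq, OfNat.ofNat_ne_zero, not_false_eq_true, zero_pow, sum_const_zero, add_zero,
    filter_filter, inter_eq_singleton_iff hj, mem_supp]

lemma mu_union {δ : ℝ} {K L : Finset (Fin n)} (h : Disjoint K L) :
    mu δ (K ∪ L) = δ ^ #K * δ ^ #L * (1 - δ) ^ (n - #K - #L) := by
  rw [mu, card_union_of_disjoint h, pow_add, Nat.sub_sub]

lemma sum_mu_filter_inter_eq (δ : ℝ) {A K : Finset (Fin n)} (hK : K ⊆ A) :
    ∑ J with A ∩ J = K, mu δ J = δ ^ #K * (1 - δ) ^ (#A - #K) := by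
  have hfiber : ({J | A ∩ J = K} : Finset (Finset (Fin n))) = Aᶜ.powerset.image (K ∪ ·) := by
    ext J
    simp only [mem_filter, mem_univ, true_and, mem_image, mem_powerset]
    constructor
    · rintro rfl
      exact ⟨J \ A, fun i => by simp +contextual, by ext i; simp; tauto⟩
    · rintro ⟨L, hL, rfl⟩
      ext i
      have := @hK i
      have := @hL i
      simp only [mem_inter, mem_union, mem_compl] at *
      tauto
  have hdisj : ∀ L ∈ Aᶜ.powerset, Disjoint K L := fun L hL =>
    disjoint_of_subset_left hK (disjoint_compl_right.mono_right (mem_powerset.mp hL))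
  rw [hfiber, sum_image fun L₁ h₁ L₂ h₂ h => by
    rw [← union_sdiff_cancel_left (hdisj L₁ h₁), h, union_sdiff_cancel_left (hdisj L₂ h₂)]]
  have hexp : ∀ L ∈ Aᶜ.powerset, mu δ (K ∪ L)
      = δ ^ #K * (1 - δ) ^ (#A - #K) * (δ ^ #L * (1 - δ) ^ (#Aᶜ - #L)) := fun L hL => by
    have hKA := card_le_card hK
    have hLA := card_le_card (mem_powerset.mp hL)
    have hcompl := card_compl A
    have hAn := card_le_univ A
    simp only [Fintype.card_fin] at hcompl hAn
    rw [mu_union (hdisj L hL), show n - #K - #L = (#A - #K) + (#Aᶜ - #L) by omega, pow_add]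
    ring
  rw [sum_congr rfl hexp, ← mul_sum, sum_pow_mul_eq_add_pow, add_sub_cancel, one_pow, mul_one]

lemma sum_mu_mul_inter (δ : ℝ) (A : Finset (Fin n)) (f : Finset (Fin n) → ℝ) :
    ∑ J, mu δ J * f (A ∩ J) = ∑ K ∈ A.powerset, δ ^ #K * (1 - δ) ^ (#A - #K) * f K := by
  rw [← sum_fiberwise_of_maps_to (g := (A ∩ ·)) (t := A.powerset)
    fun J _ => mem_powerset.mpr inter_subset_left]
  refine sum_congr rfl fun K hK => ?_
  rw [← sum_mu_filter_inter_eq δ (mem_powerset.mp hK), sum_mul]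
  exact sum_congr rfl fun J hJ => by rw [(mem_filter.mp hJ).2]

lemma sum_mu_mul_card_inter_eq_one (δ : ℝ) (A : Finset (Fin n)) :
    ∑ J, mu δ J * (if #(A ∩ J) = 1 then 1 else 0) = #A * (δ * (1 - δ) ^ (#A - 1)) := by
  rw [sum_mu_mul_inter δ A fun K => if #K = 1 then 1 else 0]
  simp only [mul_ite, mul_one, mul_zero, ← sum_filter, ← powersetCard_eq_filter]
  rw [sum_congr rfl fun K hK => by rw [(mem_powersetCard.mp hK).2], sum_const,
    card_powersetCard, Nat.choose_one_right, nsmul_eq_mul, pow_one]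

lemma sum_l2sq_RR (J : Finset (Fin n)) (T : QM n) :
    ∑ j ∈ J, l2sq (RR J j T) = ∑ s, ‖fc T s‖ ^ 2 * (if #(supp s ∩ J) = 1 then 1 else 0) := by
  calc ∑ j ∈ J, l2sq (RR J j T)
      = ∑ j ∈ J, ∑ s, if supp s ∩ J = {j} then ‖fc T s‖ ^ 2 else 0 :=
        sum_congr rfl fun j hj => by rw [l2sq_RR hj, sum_filter]
    _ = ∑ s, ‖fc T s‖ ^ 2 * (if #(supp s ∩ J) = 1 then 1 else 0) := by
        rw [sum_comm]
        simp_rw [sum_ite_inter_eq_singleton, mul_ite, mul_one, mul_zero]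

open Real in
lemma exp_neg_one_le_one_sub_inv_pow (d : ℕ) : exp (-1) ≤ (1 - 1 / (d : ℝ)) ^ (d - 1) := by
  rcases d with _ | t
  · simp
  · have h : (1 - 1 / ((t + 1 : ℕ) : ℝ)) ^ t = ((1 + (t : ℝ)⁻¹) ^ t)⁻¹ := by
      rcases t.eq_zero_or_pos with rfl | ht
      · simp
      · rw [← inv_pow]
        congr 1
        field_simp
        push_cast
        ring
    rw [Nat.add_sub_cancel, h, exp_neg]
    exact inv_anti₀ (by positivity) one_add_inv_pow_le_exp

open Real in
lemma one_div_eight_le_mul_one_sub_inv_pow {d m : ℕ} (hdm : d ≤ m) (hm : m < 2 * d) :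
    1 / 8 ≤ (m : ℝ) * (1 / d * (1 - 1 / d) ^ (m - 1)) := by
  have hd : (0 : ℝ) < d := by exact_mod_cast (show 0 < d by omega)
  have hbase0 : 0 ≤ 1 - 1 / (d : ℝ) := sub_nonneg.mpr (by simpa using Nat.cast_inv_le_one d)
  have hexp : 1 / 8 ≤ exp (-1) ^ 2 := by
    rw [exp_neg, inv_pow, one_div]
    refine inv_anti₀ (by positivity) ?_
    nlinarith [exp_one_lt_d9, exp_pos 1]
  have hmd : 1 ≤ (m : ℝ) * (1 / d) := by
    rw [mul_one_div, one_le_div hd]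
    exact_mod_cast hdm
  calc 1 / 8 ≤ exp (-1) ^ 2 := hexp
    _ ≤ ((1 - 1 / (d : ℝ)) ^ (d - 1)) ^ 2 :=
        pow_le_pow_left₀ (exp_pos _).le (exp_neg_one_le_one_sub_inv_pow d) 2
    _ ≤ (1 - 1 / (d : ℝ)) ^ (m - 1) := by
        rw [← pow_mul]
        exact pow_le_pow_of_le_one hbase0 (by simp) (by omega)
    _ ≤ (m : ℝ) * (1 / d) * (1 - 1 / d) ^ (m - 1) :=
        le_mul_of_one_le_left (pow_nonneg hbase0 _) hmd
    _ = (m : ℝ) * (1 / d * (1 - 1 / d) ^ (m - 1)) := mul_assoc _ _ _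

end QM

open QM

theorem rr_spectrum_general {n : ℕ} (d : ℕ) (T : QM n) :
    (1 / 8 : ℝ) * QM.Wapprox T d ≤
      ∑ J : Finset (Fin n), QM.mu (1 / (d : ℝ)) J * ∑ j ∈ J, QM.l2sq (QM.RR J j T) := by
  set δ : ℝ := 1 / d
  have hδ : 0 ≤ 1 - δ := sub_nonneg.mpr (by simpa [δ] using Nat.cast_inv_le_one d)
  calc (1 / 8 : ℝ) * Wapprox T d
      = ∑ s with d ≤ #(supp s) ∧ #(supp s) < 2 * d, ‖fc T s‖ ^ 2 * (1 / 8) := by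
        rw [Wapprox, mul_sum]
        simp_rw [mul_comm]
    _ ≤ ∑ s with d ≤ #(supp s) ∧ #(supp s) < 2 * d,
          ‖fc T s‖ ^ 2 * (#(supp s) * (δ * (1 - δ) ^ (#(supp s) - 1))) :=
        sum_le_sum fun s hs => mul_le_mul_of_nonneg_left
          (one_div_eight_le_mul_one_sub_inv_pow (mem_filter.mp hs).2.1 (mem_filter.mp hs).2.2)
          (sq_nonneg _)
    _ ≤ ∑ s, ‖fc T s‖ ^ 2 * (#(supp s) * (δ * (1 - δ) ^ (#(supp s) - 1))) :=
        sum_le_sum_of_subset_of_nonneg (filter_subset _ _) fun s _ _ => by positivity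
    _ = ∑ J, mu δ J * ∑ j ∈ J, l2sq (RR J j T) := by
        simp_rw [sum_l2sq_RR, mul_sum, ← sum_mu_mul_card_inter_eq_one, mul_sum]
        rw [sum_comm]
        simp_rw [mul_left_comm]

/-- For a random subset `J ⊆ [n]` with inclusion probability `1/d`,
`𝔼_J[Σ_{j∈J} ‖R_j^J(T)‖₂²] ≥ (1/8) Σ_{d ≤ |supp(s)| < 2d} |T̂(s)|²`. -/
theorem rr_spectrum {n : ℕ} (d : ℕ) (hd : 0 < d) (T : QM n) (hT : QM.opnorm T ≤ 1) :
    (1 / 8 : ℝ) * QM.Wapprox T d ≤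
      ∑ J : Finset (Fin n), QM.mu (1 / (d : ℝ)) J * ∑ j ∈ J, QM.l2sq (QM.RR J j T) :=
  rr_spectrum_general d T
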